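/- Fix w ≥ 0 and λ ∈ [0,1], with λ ∉ {0,1} if w = 0. Define f : (0,∞)² → ℝ² by f(c,z) := ( (λ²c + (w + λ(1−λ)c)z)/2 , ((1−λ)²c + (w + λ(1−λ)c)/z)/2 ), and let 𝓗 := {(b₁,b₂) ∈ (0,∞)² : 4b₁b₂ > w²} (the set of (b₁,b₂) for which the matrix [[2b₁,−w],[−w,2b₂]] is positive definite). Then f is a bijection from (0,∞)² onto 𝓗, and its inverse maps (b₁,b₂) to (c,z) where c = (4b₁b₂ − w²)/(2wλ(1−λ) + 2b₂λ² + 2b₁(1−λ)²) and z = (2b₁ − λ²c)/(w + λ(1−λ)c). -/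

import Mathlib

/-!
Write `A(c) = w + λ(1-λ)c` and `D(b) = 2wλ(1-λ) + 2b₂λ² + 2b₁(1-λ)²`. Everything rests on three
identities: for `(b₁, b₂) = f(c, z)`,
`4b₁b₂ - w² = c A(c) (λ + (1-λ)z)² / z` and `D(b) = A(c) (λ + (1-λ)z)² / z`,
so `f` lands in `𝓗` and `c` is recovered as `(4b₁b₂ - w²) / D(b)`; conversely
`2b₁ - λ²c = (2b₁(1-λ) + λw)² / D(b)` on `𝓗`, which makes the recovered `z` positive.
-/

open Set

noncomputable section

namespace Reparam

variable {w lam : ℝ}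

def coupling (w lam c : ℝ) : ℝ := w + lam * (1 - lam) * c

def reparam (w lam : ℝ) (p : ℝ × ℝ) : ℝ × ℝ :=
  ((lam ^ 2 * p.1 + coupling w lam p.1 * p.2) / 2,
    ((1 - lam) ^ 2 * p.1 + coupling w lam p.1 / p.2) / 2)

def reparamDenom (w lam : ℝ) (q : ℝ × ℝ) : ℝ :=
  2 * w * lam * (1 - lam) + 2 * q.2 * lam ^ 2 + 2 * q.1 * (1 - lam) ^ 2

def reparamInv (w lam : ℝ) (q : ℝ × ℝ) : ℝ × ℝ :=
  let c := (4 * q.1 * q.2 - w ^ 2) / reparamDenom w lam q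
  (c, (2 * q.1 - lam ^ 2 * c) / coupling w lam c)

def posDefRegion (w : ℝ) : Set (ℝ × ℝ) := {q | 0 < q.1 ∧ 0 < q.2 ∧ 4 * q.1 * q.2 > w ^ 2}

lemma four_mul_reparam_sub_sq (c : ℝ) {z : ℝ} (hz : z ≠ 0) :
    4 * (reparam w lam (c, z)).1 * (reparam w lam (c, z)).2 - w ^ 2 =
      c * coupling w lam c * (lam + (1 - lam) * z) ^ 2 / z := by
  simp only [reparam, coupling]
  field_simp
  ring

lemma reparamDenom_reparam (c : ℝ) {z : ℝ} (hz : z ≠ 0) :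
    reparamDenom w lam (reparam w lam (c, z)) =
      coupling w lam c * (lam + (1 - lam) * z) ^ 2 / z := by
  simp only [reparamDenom, reparam, coupling]
  field_simp
  ring

lemma two_mul_sub_sq_mul_reparamInv (q : ℝ × ℝ) (hD : reparamDenom w lam q ≠ 0) :
    2 * q.1 - lam ^ 2 * (reparamInv w lam q).1 =
      (2 * q.1 * (1 - lam) + lam * w) ^ 2 / reparamDenom w lam q := by
  simp only [reparamInv]
  field_simp
  simp only [reparamDenom]
  ring

lemma reparam_eq_of_mul_reparamDenom {c : ℝ} {q : ℝ × ℝ}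
    (hc : c * reparamDenom w lam q = 4 * q.1 * q.2 - w ^ 2) (hA : coupling w lam c ≠ 0)
    (hN : 2 * q.1 - lam ^ 2 * c ≠ 0) :
    reparam w lam (c, (2 * q.1 - lam ^ 2 * c) / coupling w lam c) = q := by
  simp only [reparam]
  ext
  · field_simp
    ring
  · field_simp
    simp only [reparamDenom, coupling] at hc hA ⊢
    linear_combination hc

lemma coupling_pos (hw : 0 ≤ w) (hlam : lam ∈ Icc (0 : ℝ) 1)
    (hw0 : w = 0 → lam ≠ 0 ∧ lam ≠ 1) {c : ℝ} (hc : 0 < c) : 0 < coupling w lam c := by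
  obtain ⟨hl0, hl1⟩ := hlam
  rcases hw.eq_or_lt with rfl | hw
  · obtain ⟨hl0', hl1'⟩ := hw0 rfl
    have : 0 < lam * (1 - lam) := mul_pos (hl0.lt_of_ne' hl0') (sub_pos.2 (hl1.lt_of_ne hl1'))
    simp only [coupling]
    positivity
  · simp only [coupling]
    have : 0 ≤ lam * (1 - lam) := mul_nonneg hl0 (sub_nonneg.2 hl1)
    positivity

lemma reparamDenom_pos (hw : 0 ≤ w) (hlam : lam ∈ Icc (0 : ℝ) 1) {q : ℝ × ℝ} (hq₁ : 0 < q.1)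
    (hq₂ : 0 < q.2) : 0 < reparamDenom w lam q := by
  obtain ⟨hl0, hl1⟩ := hlam
  simp only [reparamDenom]
  have : 0 < q.2 * lam ^ 2 + q.1 * (1 - lam) ^ 2 := by
    rcases hl0.eq_or_lt with rfl | hl0'
    · simpa using hq₁
    · have := mul_nonneg hq₁.le (sq_nonneg (1 - lam))
      positivity
  nlinarith [mul_nonneg (mul_nonneg hw hl0) (sub_nonneg.2 hl1)]

lemma add_one_sub_mul_pos {a z : ℝ} (ha : a ∈ Icc (0 : ℝ) 1) (hz : 0 < z) :
    0 < a + (1 - a) * z := by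
  rcases ha.1.eq_or_lt with rfl | ha₀
  · simpa using hz
  · have := mul_nonneg (sub_nonneg.2 ha.2) hz.le
    positivity

lemma mapsTo_reparam (hw : 0 ≤ w) (hlam : lam ∈ Icc (0 : ℝ) 1)
    (hw0 : w = 0 → lam ≠ 0 ∧ lam ≠ 1) :
    MapsTo (reparam w lam) (Ioi 0 ×ˢ Ioi 0) (posDefRegion w) := by
  rintro ⟨c, z⟩ ⟨hc : 0 < c, hz : 0 < z⟩
  have hA := coupling_pos hw hlam hw0 hc
  have hs := add_one_sub_mul_pos hlam hz
  refine ⟨by simp only [reparam]; positivity, by simp only [reparam]; positivity, ?_⟩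
  rw [gt_iff_lt, ← sub_pos, four_mul_reparam_sub_sq c hz.ne']
  exact div_pos (mul_pos (mul_pos hc hA) (pow_pos hs 2)) hz

lemma reparamInv_fst_pos (hw : 0 ≤ w) (hlam : lam ∈ Icc (0 : ℝ) 1) {q : ℝ × ℝ}
    (hq : q ∈ posDefRegion w) : 0 < (reparamInv w lam q).1 :=
  div_pos (by linarith [hq.2.2]) (reparamDenom_pos hw hlam hq.1 hq.2.1)

lemma two_mul_sub_sq_mul_reparamInv_pos (hw : 0 ≤ w) (hlam : lam ∈ Icc (0 : ℝ) 1)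
    (hw0 : w = 0 → lam ≠ 0 ∧ lam ≠ 1) {q : ℝ × ℝ} (hq : q ∈ posDefRegion w) :
    0 < 2 * q.1 - lam ^ 2 * (reparamInv w lam q).1 := by
  have hD := reparamDenom_pos hw hlam hq.1 hq.2.1
  have hB : 0 < 2 * q.1 * (1 - lam) + lam * w := by
    rcases hlam.2.eq_or_lt with rfl | hl1
    · have := hw.lt_of_ne' fun h => (hw0 h).2 rfl
      linarith
    · nlinarith [mul_pos hq.1 (sub_pos.2 hl1), mul_nonneg hlam.1 hw]
  rw [two_mul_sub_sq_mul_reparamInv q hD.ne']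
  positivity

lemma mapsTo_reparamInv (hw : 0 ≤ w) (hlam : lam ∈ Icc (0 : ℝ) 1)
    (hw0 : w = 0 → lam ≠ 0 ∧ lam ≠ 1) :
    MapsTo (reparamInv w lam) (posDefRegion w) (Ioi 0 ×ˢ Ioi 0) := fun _ hq =>
  have hc := reparamInv_fst_pos hw hlam hq
  ⟨hc, div_pos (two_mul_sub_sq_mul_reparamInv_pos hw hlam hw0 hq) (coupling_pos hw hlam hw0 hc)⟩

lemma leftInvOn_reparamInv (hw : 0 ≤ w) (hlam : lam ∈ Icc (0 : ℝ) 1)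
    (hw0 : w = 0 → lam ≠ 0 ∧ lam ≠ 1) :
    LeftInvOn (reparamInv w lam) (reparam w lam) (Ioi 0 ×ˢ Ioi 0) := by
  rintro ⟨c, z⟩ ⟨hc : 0 < c, hz : 0 < z⟩
  have hA := coupling_pos hw hlam hw0 hc
  have hs := add_one_sub_mul_pos hlam hz
  have hc' : (4 * (reparam w lam (c, z)).1 * (reparam w lam (c, z)).2 - w ^ 2) /
      reparamDenom w lam (reparam w lam (c, z)) = c := by
    rw [four_mul_reparam_sub_sq c hz.ne', reparamDenom_reparam c hz.ne']
    field_simp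
  simp only [reparamInv]
  rw [hc']
  simp only [reparam]
  ext
  · rfl
  · field_simp
    ring

lemma rightInvOn_reparamInv (hw : 0 ≤ w) (hlam : lam ∈ Icc (0 : ℝ) 1)
    (hw0 : w = 0 → lam ≠ 0 ∧ lam ≠ 1) :
    RightInvOn (reparamInv w lam) (reparam w lam) (posDefRegion w) := fun _ hq =>
  reparam_eq_of_mul_reparamDenom
    (div_mul_cancel₀ _ (reparamDenom_pos hw hlam hq.1 hq.2.1).ne')
    (coupling_pos hw hlam hw0 (reparamInv_fst_pos hw hlam hq)).ne'
    (two_mul_sub_sq_mul_reparamInv_pos hw hlam hw0 hq).ne'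

end Reparam

end

open Reparam in
theorem stmt4 (w lam : ℝ) (hw : 0 ≤ w) (hlam : lam ∈ Set.Icc (0 : ℝ) 1)
    (hw0 : w = 0 → lam ≠ 0 ∧ lam ≠ 1) :
    (let f : ℝ × ℝ → ℝ × ℝ := fun p =>
       ((lam ^ 2 * p.1 + (w + lam * (1 - lam) * p.1) * p.2) / 2,
        ((1 - lam) ^ 2 * p.1 + (w + lam * (1 - lam) * p.1) / p.2) / 2)
     let g : ℝ × ℝ → ℝ × ℝ := fun q =>
       ((4 * q.1 * q.2 - w ^ 2) /
          (2 * w * lam * (1 - lam) + 2 * q.2 * lam ^ 2 + 2 * q.1 * (1 - lam) ^ 2),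
        (2 * q.1 - lam ^ 2 * ((4 * q.1 * q.2 - w ^ 2) /
          (2 * w * lam * (1 - lam) + 2 * q.2 * lam ^ 2 + 2 * q.1 * (1 - lam) ^ 2))) /
          (w + lam * (1 - lam) * ((4 * q.1 * q.2 - w ^ 2) /
          (2 * w * lam * (1 - lam) + 2 * q.2 * lam ^ 2 + 2 * q.1 * (1 - lam) ^ 2))))
     let 𝓗 : Set (ℝ × ℝ) := {q | 0 < q.1 ∧ 0 < q.2 ∧ 4 * q.1 * q.2 > w ^ 2}
     Set.BijOn f (Set.Ioi 0 ×ˢ Set.Ioi 0) 𝓗 ∧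
       Set.InvOn g f (Set.Ioi 0 ×ˢ Set.Ioi 0) 𝓗) := by
  intro f g 𝓗
  have hinv : InvOn (reparamInv w lam) (reparam w lam) (Ioi 0 ×ˢ Ioi 0) (posDefRegion w) :=
    ⟨leftInvOn_reparamInv hw hlam hw0, rightInvOn_reparamInv hw hlam hw0⟩
  exact ⟨hinv.bijOn (mapsTo_reparam hw hlam hw0) (mapsTo_reparamInv hw hlam hw0), hinv⟩
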